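/- For every integer n ≥ 1, if p ∈ (0,1) and υ_0, …, υ_{n−1} ∈ (0,1) (with the convention υ_n = 1), then for every c = (c_0,…,c_n) ∈ {0,1}^{n+1} the coefficient of the monomial u_0^{c_0} ⋯ u_n^{c_n} in the polynomial Q_n is strictly positive; consequently Q_n has exactly 2^{n+1} nonzero coefficients. -/
import Mathlib


open scoped BigOperators

noncomputable section

/-- Binomial coefficient `C(m,k)` for integers, with the convention that it is `0`
when `k < 0` or `k > m`. -/
def ichoose (m k : ℤ) : ℝ := if 0 ≤ k ∧ k ≤ m then ((m.toNat).choose k.toNat : ℝ) else 0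

/-- The previous population size: `prevx x0 xs i` is `x0` if `i = 0` and `xs (i-1)` otherwise. -/
def prevx (x0 : ℕ) (xs : ℕ → ℕ) (i : ℕ) : ℕ := if i = 0 then x0 else xs (i - 1)

/-- Extension of a tuple `f : Fin n → ℕ` to all of `ℕ`, with default value `d` beyond `n`. -/
def extFin (n : ℕ) (f : Fin n → ℕ) (d : ℕ) : ℕ → ℕ := fun i => if h : i < n then f ⟨i, h⟩ else d

/-- Extension of a positive tuple of population sizes to all of `ℕ`. -/
def xbar (n : ℕ) (x : Fin n → ℕ+) : ℕ → ℕ := extFin n (fun j => (x j : ℕ)) 1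

/-- The summand of the POPBP likelihood: for hidden trajectory `xs = (x_1, …, x_n)`
(indexed here by `i ∈ {0, …, n-1}`, so `xs i = x_{i+1}`), data `y = (y_1, …, y_n)`
(again `y i = y_{i+1}`), initial population `x0`, detection probability `p` and
transition parameters `υ = (υ_0, …, υ_{n-1})`, this is
`∏_{i=1}^{n} C(x_i, y_i) p^{y_i} q^{x_i - y_i} C(x_i - 1, x_{i-1} - 1) υ_{i-1}^{x_{i-1}} (1-υ_{i-1})^{x_i - x_{i-1}}`. -/
def popbpTerm (n : ℕ) (p : ℝ) (υ : ℕ → ℝ) (x0 : ℕ) (y : ℕ → ℕ) (xs : ℕ → ℕ) : ℝ :=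
  ∏ i ∈ Finset.range n,
    (ichoose (xs i) (y i) * p ^ (y i) * (1 - p) ^ (xs i - y i) *
      ichoose ((xs i : ℤ) - 1) ((prevx x0 xs i : ℤ) - 1) *
      υ i ^ (prevx x0 xs i) * (1 - υ i) ^ (xs i - prevx x0 xs i))

/-- The POPBP likelihood `L(x_0, y_1, …, y_n)`: the sum over hidden trajectories
`(x_1, …, x_n) ∈ (ℕ∖{0})^n` of `popbpTerm`. -/
def popbpL (n : ℕ) (p : ℝ) (υ : ℕ → ℝ) (x0 : ℕ) (y : Fin n → ℕ) : ℝ :=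
  ∑' x : Fin n → ℕ+, popbpTerm n p υ x0 (extFin n y 0) (xbar n x)

/-- The polynomials `Q_i` in the variables `u_0, …, u_n` (the variable `u_j` is `X j`):
`Q_0 = (1 - υ_0) + υ_0 u_0` and `Q_i = (1 - υ_i) + υ_i (p u_i + q) Q_{i-1}`. -/
def Qpoly (p : ℝ) (υ : ℕ → ℝ) : ℕ → MvPolynomial ℕ ℝ
  | 0 => MvPolynomial.C (1 - υ 0) + MvPolynomial.C (υ 0) * MvPolynomial.X 0
  | (i + 1) => MvPolynomial.C (1 - υ (i + 1)) +
      MvPolynomial.C (υ (i + 1)) *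
        (MvPolynomial.C p * MvPolynomial.X (i + 1) + MvPolynomial.C (1 - p)) * Qpoly p υ i

/-- The numerator polynomial `P = u_0 υ_0 ⋯ υ_{n-1} (p u_1 + q) ⋯ (p u_n + q)`. -/
def Ppoly (n : ℕ) (p : ℝ) (υ : ℕ → ℝ) : MvPolynomial ℕ ℝ :=
  MvPolynomial.C (∏ i ∈ Finset.range n, υ i) * MvPolynomial.X 0 *
    ∏ i ∈ Finset.range n,
      (MvPolynomial.C p * MvPolynomial.X (i + 1) + MvPolynomial.C (1 - p))

/-- The monomial exponent vector `u_0^{c 0} ⋯ u_n^{c n}` associated to `c : ℕ → ℕ`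
(only the values `c 0, …, c n` are used). -/
def mono (n : ℕ) (c : ℕ → ℕ) : ℕ →₀ ℕ := ∑ i ∈ Finset.range (n + 1), Finsupp.single i (c i)

open MvPolynomial

def good (m : ℕ) (c : ℕ →₀ ℕ) : Prop := (∀ i, c i ≤ 1) ∧ ∀ i, m < i → c i = 0

lemma good_zero (m : ℕ) : good m 0 := ⟨fun _ => by simp, fun _ _ => rfl⟩

lemma good_mono {m : ℕ} {c : ℕ →₀ ℕ} (h : good m c) : good (m+1) c :=
  ⟨h.1, fun i hi => h.2 i (by omega)⟩

lemma step_lemma (p : ℝ) (hp0 : 0 < p) (hp1 : p < 1) (a : ℝ) (ha0 : 0 < a) (ha1 : a ≤ 1)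
    (m : ℕ) (Q : MvPolynomial ℕ ℝ)
    (hQ : ∀ c, (good m c → 0 < Q.coeff c) ∧ (¬ good m c → Q.coeff c = 0)) :
    ∀ c, (good (m+1) c →
        0 < (C (1-a) + C a * (C p * X (m+1) + C (1-p)) * Q).coeff c) ∧
      (¬ good (m+1) c →
        (C (1-a) + C a * (C p * X (m+1) + C (1-p)) * Q).coeff c = 0) := by
  intro c
  have hR : C (1-a) + C a * (C p * X (m+1) + C (1-p)) * Q
      = C (1-a) + (C a * (C p * (Q * X (m+1))) + C a * (C (1-p) * Q)) := by ring
  rw [hR]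
  rw [coeff_add, coeff_add, coeff_C, coeff_C_mul, coeff_C_mul, coeff_C_mul, coeff_C_mul,
    coeff_mul_X']
  constructor
  · intro hg
    have h1 := hg.1 (m+1)
    interval_cases h : c (m+1)
    · -- c (m+1) = 0
      have hgm : good m c := ⟨hg.1, fun i hi => by
        rcases eq_or_lt_of_le (Nat.succ_le_of_lt hi) with h' | h'
        · rw [← h']; exact h
        · exact hg.2 i h'⟩
      have hs : (m+1) ∉ c.support := by simp [Finsupp.mem_support_iff, h]
      rw [if_neg hs]
      have hc := (hQ c).1 hgm
      have h0 : (0:ℝ) ≤ if (0 : ℕ →₀ ℕ) = c then 1 - a else 0 := by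
        split <;> linarith
      nlinarith [mul_pos ha0 (mul_pos (by linarith : (0:ℝ) < 1 - p) hc)]
    · -- c (m+1) = 1
      have hne : (0 : ℕ →₀ ℕ) ≠ c := fun h0 => by simp [← h0] at h
      rw [if_neg hne]
      have hs : (m+1) ∈ c.support := by simp [Finsupp.mem_support_iff, h]
      rw [if_pos hs]
      have hng : ¬ good m c := fun hg' => by have := hg'.2 (m+1) (by omega); omega
      have hz := (hQ c).2 hng
      have hc := (hQ _).1 (by
        constructor
        · intro i
          rw [Finsupp.tsub_apply]
          exact le_trans (Nat.sub_le _ _) (hg.1 i)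
        · intro i hi
          rw [Finsupp.tsub_apply, Finsupp.single_apply]
          by_cases hie : m + 1 = i
          · rw [if_pos hie, ← hie, h]
          · rw [if_neg hie]
            exact hg.2 i (by omega) : good m (c - Finsupp.single (m+1) 1))
      rw [hz]
      have := mul_pos ha0 (mul_pos hp0 hc)
      linarith
  · intro hng
    have hne : (0 : ℕ →₀ ℕ) ≠ c := fun h0 => hng (h0 ▸ good_zero (m+1))
    rw [if_neg hne]
    have hngm : ¬ good m c := fun hg' => hng (good_mono hg')
    have hz := (hQ c).2 hngm
    by_cases hs : (m+1) ∈ c.support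
    · rw [if_pos hs]
      have hd : ¬ good m (c - Finsupp.single (m+1) 1) := by
        intro hd
        apply hng
        have hc1 : c (m+1) = 1 := by
          have h1 := hd.2 (m+1) (by omega)
          rw [Finsupp.tsub_apply, Finsupp.single_apply, if_pos rfl] at h1
          have h2 : c (m+1) ≠ 0 := Finsupp.mem_support_iff.mp hs
          omega
        constructor
        · intro i
          by_cases hie : i = m + 1
          · rw [hie, hc1]
          · have := hd.1 i
            rw [Finsupp.tsub_apply, Finsupp.single_apply, if_neg (fun h => hie h.symm),
              Nat.sub_zero] at this
            exact this
        · intro i hi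
          have := hd.2 i (by omega)
          rw [Finsupp.tsub_apply, Finsupp.single_apply,
            if_neg (by omega : ¬ m + 1 = i), Nat.sub_zero] at this
          exact this
      rw [(hQ _).2 hd, hz]
      ring
    · rw [if_neg hs, hz]
      ring

lemma key_lemma (p : ℝ) (hp0 : 0 < p) (hp1 : p < 1) (υ : ℕ → ℝ) :
    ∀ m, (∀ i ≤ m, 0 < υ i ∧ υ i < 1) →
    ∀ c : ℕ →₀ ℕ, (good m c → 0 < (Qpoly p υ m).coeff c) ∧
      (¬ good m c → (Qpoly p υ m).coeff c = 0) := by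
  intro m
  induction m with
  | zero =>
    intro hυ c
    obtain ⟨hυ0, hυ1⟩ := hυ 0 le_rfl
    have hs0 : Finsupp.single 0 1 ≠ (0 : ℕ →₀ ℕ) := by
      intro h; have := DFunLike.congr_fun h 0; simp at this
    have hcoeff : (Qpoly p υ 0).coeff c
        = (if (0 : ℕ →₀ ℕ) = c then 1 - υ 0 else 0)
          + υ 0 * (if Finsupp.single 0 1 = c then 1 else 0) := by
      show (MvPolynomial.C (1 - υ 0) + MvPolynomial.C (υ 0) * MvPolynomial.X 0).coeff c = _
      rw [coeff_add, coeff_C, coeff_C_mul, coeff_X']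
    constructor
    · intro hg
      by_cases hc0 : c = 0
      · subst hc0
        rw [hcoeff, if_pos rfl, if_neg hs0]
        linarith
      · have hc : c = Finsupp.single 0 1 := by
          ext j
          rw [Finsupp.single_apply]
          by_cases hj : (0:ℕ) = j
          · subst hj
            rw [if_pos rfl]
            have h1 := hg.1 0
            rcases Nat.le_one_iff_eq_zero_or_eq_one.mp h1 with h | h
            · exfalso; apply hc0; ext i
              rcases Nat.eq_zero_or_pos i with hi | hi
              · simp [hi, h]
              · simp [hg.2 i hi]
            · simp [h]
          · rw [if_neg hj]
            exact hg.2 j (by omega)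
        have hne : (0 : ℕ →₀ ℕ) ≠ c := by rw [hc]; exact hs0.symm
        rw [hcoeff, if_neg hne, if_pos hc.symm]
        linarith
    · intro hng
      have h0 : (0 : ℕ →₀ ℕ) ≠ c := fun h => hng (h ▸ good_zero 0)
      have h1 : Finsupp.single 0 1 ≠ c := by
        intro h
        apply hng
        rw [← h]
        constructor
        · intro i; rw [Finsupp.single_apply]; split <;> omega
        · intro i hi; rw [Finsupp.single_apply, if_neg (by omega)]
      rw [hcoeff, if_neg h0, if_neg h1]
      ring
  | succ m ih =>
    intro hυ c
    have hQm := ih (fun i hi => hυ i (by omega))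
    obtain ⟨ha0, ha1⟩ := hυ (m+1) le_rfl
    exact step_lemma p hp0 hp1 (υ (m+1)) ha0 (le_of_lt ha1) m (Qpoly p υ m) hQm c

lemma indic_apply (S : Finset ℕ) (j : ℕ) :
    (∑ i ∈ S, Finsupp.single i (1:ℕ)) j = if j ∈ S then 1 else 0 := by
  rw [Finsupp.finset_sum_apply]
  simp [Finsupp.single_apply, Finset.sum_ite_eq']

lemma indic_inj : Function.Injective (fun S : Finset ℕ => ∑ i ∈ S, Finsupp.single i (1:ℕ)) := by
  intro S T h
  ext j
  have hj := DFunLike.congr_fun h j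
  simp only [indic_apply] at hj
  constructor <;> intro hjm <;> by_contra hc <;> simp [hjm, hc] at hj

lemma good_iff (n : ℕ) (c : ℕ →₀ ℕ) :
    good n c ↔ c ∈ (Finset.range (n+1)).powerset.image
      (fun S => ∑ i ∈ S, Finsupp.single i (1:ℕ)) := by
  constructor
  · intro h
    refine Finset.mem_image.mpr ⟨c.support, ?_, ?_⟩
    · rw [Finset.mem_powerset]
      intro i hi
      rw [Finset.mem_range]
      by_contra hlt
      exact (Finsupp.mem_support_iff.mp hi) (h.2 i (by omega))
    · ext j
      rw [indic_apply]
      by_cases hj : j ∈ c.support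
      · rw [if_pos hj]
        have h1 := h.1 j
        have h2 := Finsupp.mem_support_iff.mp hj
        omega
      · rw [if_neg hj]
        exact (Finsupp.notMem_support_iff.mp hj).symm
  · intro h
    obtain ⟨S, hS, rfl⟩ := Finset.mem_image.mp h
    rw [Finset.mem_powerset] at hS
    constructor
    · intro i
      rw [indic_apply]; split <;> omega
    · intro i hi
      rw [indic_apply, if_neg]
      intro hiS
      have := Finset.mem_range.mp (hS hiS); omega

lemma mono_apply (n : ℕ) (c : ℕ → ℕ) (j : ℕ) :
    mono n c j = if j < n + 1 then c j else 0 := by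
  rw [mono, Finsupp.finset_sum_apply]
  simp [Finsupp.single_apply, Finset.sum_ite_eq', Finset.mem_range]

/-- For `n ≥ 1`, if `p ∈ (0,1)` and `υ_0, …, υ_{n-1} ∈ (0,1)`
(with `υ_n = 1`), then for every `c ∈ {0,1}^{n+1}` the coefficient of
`u_0^{c_0} ⋯ u_n^{c_n}` in `Q_n` is strictly positive; consequently `Q_n` has exactly
`2^{n+1}` nonzero coefficients. -/
theorem popbp_Qn_coeffs_pos
    (n : ℕ) (hn : 1 ≤ n) (p : ℝ) (hp : p ∈ Set.Ioo (0 : ℝ) 1)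
    (υ : ℕ → ℝ) (hυ : ∀ i < n, υ i ∈ Set.Ioo (0 : ℝ) 1) (hυn : υ n = 1) :
    (∀ c : Fin (n + 1) → ℕ, (∀ i, c i ≤ 1) →
      0 < MvPolynomial.coeff (mono n (extFin (n + 1) c 0)) (Qpoly p υ n)) ∧
    (Qpoly p υ n).support.card = 2 ^ (n + 1) := by
  obtain ⟨hp0, hp1⟩ := hp
  cases n with
  | zero => omega
  | succ m =>
    have hQm := key_lemma p hp0 hp1 υ m
      (fun i hi => ⟨(hυ i (by omega)).1, (hυ i (by omega)).2⟩)
    have hdich : ∀ c, (good (m+1) c → 0 < (Qpoly p υ (m+1)).coeff c) ∧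
        (¬ good (m+1) c → (Qpoly p υ (m+1)).coeff c = 0) := by
      intro c
      have := step_lemma p hp0 hp1 (υ (m+1)) (by rw [hυn]; norm_num) (le_of_eq hυn)
        m (Qpoly p υ m) hQm c
      simpa only [Qpoly] using this
    constructor
    · intro c hc
      apply (hdich _).1
      constructor
      · intro j
        rw [mono_apply]
        split
        · rw [extFin]
          split
          · exact hc _
          · omega
        · omega
      · intro j hj
        rw [mono_apply, if_neg (by omega)]
    · have hsupp : (Qpoly p υ (m+1)).support = (Finset.range (m+2)).powerset.image
          (fun S => ∑ i ∈ S, Finsupp.single i (1:ℕ)) := by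
        ext c
        rw [MvPolynomial.mem_support_iff, ← good_iff]
        constructor
        · intro h
          by_contra hg
          exact h ((hdich c).2 hg)
        · intro h
          exact ne_of_gt ((hdich c).1 h)
      rw [hsupp, Finset.card_image_of_injective _ indic_inj, Finset.card_powerset,
        Finset.card_range]
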